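/- arXiv:0806.2923 — 2 statements merged into one kernel-verified Lean document; each statement's English description precedes it below -/
import Mathlib

section
/- If player 1 uses an optimal parity-game winning strategy from a node s in his winning set W_1, then every finite play π in the escape arena starting at s and ending in ⊥ satisfies ℘(π) ≼ ℘̄, where ℘̄ is the ≺-maximal value of an acyclic path ending in ⊥. -/
open scoped Classical

/-- The order `≺` on integer color profiles `ℤ^d`: compare at the largest index where
they differ; at an even index the larger entry wins, at an odd index the smaller one. -/
def FinLt {d : ℕ} (p q : Fin d → ℤ) : Prop :=
  ∃ k : Fin d, p k ≠ q k ∧ (∀ j, k < j → p j = q j) ∧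
    ((Even (k : ℕ) ∧ p k < q k) ∨ (Odd (k : ℕ) ∧ q k < p k))

/-- Reflexive closure `≼` of `FinLt`. -/
def FinLe {d : ℕ} (p q : Fin d → ℤ) : Prop := p = q ∨ FinLt p q

/-- Color profiles: `ℤ^d` together with `-∞` (`bot`) and `∞` (`top`). -/
inductive Prof (d : ℕ) where
  | bot : Prof d
  | fin : (Fin d → ℤ) → Prof d
  | top : Prof d

/-- The order `≺` on color profiles: `-∞` is the bottom element, `∞` the top element,
finite profiles are compared by `FinLt`. -/
def Prof.Lt {d : ℕ} : Prof d → Prof d → Prop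
  | .bot, .bot => False
  | .bot, .fin _ => True
  | .bot, .top => True
  | .fin _, .bot => False
  | .fin p, .fin q => FinLt p q
  | .fin _, .top => True
  | .top, _ => False

/-- Reflexive closure `≼` of `Prof.Lt`. -/
def Prof.Le {d : ℕ} (p q : Prof d) : Prop := p = q ∨ Prof.Lt p q

/-- Adding a vector in `ℤ^d` to a profile; `±∞` are absorbing. -/
def Prof.add {d : ℕ} : Prof d → (Fin d → ℤ) → Prof d
  | .bot, _ => .bot
  | .fin p, q => .fin (p + q)
  | .top, _ => .top

/-- A parity game arena: a finite directed graph, each node owned by player 0 or 1 and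
colored by a color in `{0,…,d-1}`; every node has at least one successor. -/
structure PGA (V : Type) (d : ℕ) where
  edge : V → V → Prop
  owner : V → Fin 2
  color : V → Fin d
  succ : ∀ v, ∃ w, edge v w

variable {V : Type} {d : ℕ}

/-- The profile `℘(s)` of a single vertex: the unit vector at its color. -/
def unitProf (A : PGA V d) (s : V) : Fin d → ℤ := fun k => if A.color s = k then 1 else 0

/-- The color profile `℘(π)` of a finite sequence of vertices: how often each color occurs. -/
def listProf (A : PGA V d) (L : List V) : Fin d → ℤ := fun k => ((L.map A.color).count k : ℤ)

/-- `℘(s) + p` for a vertex `s` and a profile `p`. -/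
def addV (A : PGA V d) (s : V) (p : Prof d) : Prof d := p.add (unitProf A s)

/-- Edges of the escape arena `A_⊥` over `Option V`, where `none` is the sink `⊥`:
all edges of `A`, plus an edge from every player-0 node to `⊥`; `⊥` has no outgoing edges. -/
def EdgeB (A : PGA V d) : Option V → Option V → Prop
  | some u, some v => A.edge u v
  | some u, none => A.owner u = 0
  | none, _ => False

/-- A (memoryless, possibly non-deterministic) strategy of player 0 in `A_⊥`:
a set of player-0 edges giving every player-0 node at least one successor. -/
def Strategy0 (A : PGA V d) (σ : V → Option V → Prop) : Prop :=
  (∀ s t, σ s t → A.owner s = 0 ∧ EdgeB A (some s) t) ∧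
  (∀ s, A.owner s = 0 → ∃ t, σ s t)

/-- A (memoryless, possibly non-deterministic) strategy of player 1 (who never moves to `⊥`). -/
def Strategy1 (A : PGA V d) (τ : V → V → Prop) : Prop :=
  (∀ s t, τ s t → A.owner s = 1 ∧ A.edge s t) ∧
  (∀ s, A.owner s = 1 → ∃ t, τ s t)

/-- A strategy is deterministic if it picks at most one successor per node. -/
def Deterministic (σ : V → Option V → Prop) : Prop :=
  ∀ s t t', σ s t → σ s t' → t = t'

/-- Edges of `A_⊥` restricted to a player-0 strategy `σ` that stay inside `V`
(cycles of `A_⊥|σ` never pass through `⊥`). -/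
def EdgeSig (A : PGA V d) (σ : V → Option V → Prop) (u v : V) : Prop :=
  (A.owner u = 1 ∧ A.edge u v) ∨ σ u (some v)

/-- A (nonempty) cycle in `A_⊥|σ`: consecutive edges plus the wrap-around edge. -/
def CycleIn (A : PGA V d) (σ : V → Option V → Prop) (L : List V) : Prop :=
  L ≠ [] ∧ List.Chain' (EdgeSig A σ) L ∧
  ∀ a b, L.head? = some a → L.getLast? = some b → EdgeSig A σ b a

/-- A player-0 strategy is reasonable if `A_⊥|σ` has no 1-dominated cycle,
i.e. on every cycle the dominating (maximal) color is even. -/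
def Reasonable (A : PGA V d) (σ : V → Option V → Prop) : Prop :=
  ∀ L, CycleIn A σ L → ∀ v ∈ L, (∀ w ∈ L, A.color w ≤ A.color v) → Even ((A.color v : ℕ))

/-- One step of a play in `A_⊥` with player 0 using `σ` and player 1 using `τ`;
the sink `⊥` is absorbing. -/
def PlayStep (A : PGA V d) (σ : V → Option V → Prop) (τ : V → V → Prop) :
    Option V → Option V → Prop
  | none, y => y = none
  | some u, y => (A.owner u = 0 ∧ σ u y) ∨ (A.owner u = 1 ∧ ∃ v, y = some v ∧ τ u v)

/-- A play from `s` in `A_⊥|σ,τ` (modelled with absorbing sink). -/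
def IsPlay (A : PGA V d) (σ : V → Option V → Prop) (τ : V → V → Prop)
    (s : V) (π : ℕ → Option V) : Prop :=
  π 0 = some s ∧ ∀ n, PlayStep A σ τ (π n) (π (n + 1))

/-- One step of a play in `A_⊥` with player 0 using `σ`, player 1 unconstrained. -/
def PlayStepB (A : PGA V d) (σ : V → Option V → Prop) : Option V → Option V → Prop
  | none, y => y = none
  | some u, y => (A.owner u = 0 ∧ σ u y) ∨ (A.owner u = 1 ∧ ∃ v, y = some v ∧ A.edge u v)

/-- A play from `s` in `A_⊥|σ` against an arbitrary player 1. -/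
def IsPlayB (A : PGA V d) (σ : V → Option V → Prop) (s : V) (π : ℕ → Option V) : Prop :=
  π 0 = some s ∧ ∀ n, PlayStepB A σ (π n) (π (n + 1))

/-- Color `k` occurs at position `n` of the play `π`. -/
def ColorAt (A : PGA V d) (π : ℕ → Option V) (n : ℕ) (k : Fin d) : Prop :=
  ∃ v, π n = some v ∧ A.color v = k

/-- An infinite play of `A_⊥` (never reaching `⊥`) is won by player 0 iff the maximal color
occurring infinitely often is even. -/
def Won0B (A : PGA V d) (π : ℕ → Option V) : Prop :=
  ∃ k : Fin d, Even ((k : ℕ)) ∧ (∀ N, ∃ n ≥ N, ColorAt A π n k) ∧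
    ∀ j : Fin d, k < j → ∃ N, ∀ n ≥ N, ¬ ColorAt A π n j

/-- The value `℘(π)` of a play in `A_⊥`: for a finite play (reaching `⊥`), the color profile
of its vertices; for an infinite play, `∞` if player 0 wins it and `-∞` otherwise. -/
noncomputable def PlayValue (A : PGA V d) (π : ℕ → Option V) : Prof d :=
  if h : ∃ n, π n = none then
    .fin (fun k =>
      (((Finset.range (Nat.find h)).filter (fun n => ColorAt A π n k)).card : ℤ))
  else if Won0B A π then .top else .bot

/-- `p` is the `≺`-maximum of the set `S` of profiles. -/
def IsMaxOf {d : ℕ} (S : Set (Prof d)) (p : Prof d) : Prop := p ∈ S ∧ ∀ q ∈ S, Prof.Le q p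

/-- `p` is the `≺`-minimum of the set `S` of profiles. -/
def IsMinOf {d : ℕ} (S : Set (Prof d)) (p : Prof d) : Prop := p ∈ S ∧ ∀ q ∈ S, Prof.Le p q

/-- `W` is the valuation `𝒱_σ` of the player-0 strategy `σ`: `W(⊥) = ō`, and `W(s)` is the
`≺`-minimal value player 1 can guarantee (by a memoryless strategy) in any play from `s`
in `A_⊥|σ`. -/
def IsValuation (A : PGA V d) (σ : V → Option V → Prop) (W : Option V → Prof d) : Prop :=
  W none = .fin 0 ∧
  ∀ s : V, IsMinOf
    { p | ∃ τ, Strategy1 A τ ∧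
        IsMaxOf { q | ∃ π, IsPlay A σ τ s π ∧ q = PlayValue A π } p }
    (W (some s))

/-- `(s,t)` is an improvement of `σ` w.r.t. the valuation `W`: a player-0 edge with
`W(s) ≼ ℘(s) + W(t)`.  `I_σ` is the set (strategy) of all improvements. -/
def Improvement (A : PGA V d) (W : Option V → Prof d) (s : V) (t : Option V) : Prop :=
  A.owner s = 0 ∧ EdgeB A (some s) t ∧ Prof.Le (W (some s)) (addV A s (W t))

/-- `(s,t)` is a strict improvement of `σ` w.r.t. `W`: a player-0 edge with
`W(s) ≺ ℘(s) + W(t)`. -/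
def StrictImp (A : PGA V d) (W : Option V → Prof d) (s : V) (t : Option V) : Prop :=
  A.owner s = 0 ∧ EdgeB A (some s) t ∧ Prof.Lt (W (some s)) (addV A s (W t))

/-- A memoryless strategy of player 0 in the original parity game arena `A`. -/
def Strat0A (A : PGA V d) (σ : V → V → Prop) : Prop :=
  (∀ s t, σ s t → A.owner s = 0 ∧ A.edge s t) ∧ (∀ s, A.owner s = 0 → ∃ t, σ s t)

/-- A play in `A` from `s` where player 0 follows `σ` and player 1 is unconstrained. -/
def PlayA (A : PGA V d) (σ : V → V → Prop) (s : V) (π : ℕ → V) : Prop :=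
  π 0 = s ∧ ∀ n, (A.owner (π n) = 0 → σ (π n) (π (n + 1))) ∧
    (A.owner (π n) = 1 → A.edge (π n) (π (n + 1)))

/-- Parity winning condition in `A` for player 0: the maximal color seen infinitely often is even. -/
def Won0A (A : PGA V d) (π : ℕ → V) : Prop :=
  ∃ k : Fin d, Even ((k : ℕ)) ∧ (∀ N, ∃ n ≥ N, A.color (π n) = k) ∧
    ∀ j : Fin d, k < j → ∃ N, ∀ n ≥ N, A.color (π n) ≠ j

/-- Player 0 wins the node `s` of the parity game arena `A` (with a memoryless strategy). -/
def Win0 (A : PGA V d) (s : V) : Prop :=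
  ∃ σ, Strat0A A σ ∧ ∀ π, PlayA A σ s π → Won0A A π

/-- An acyclic path of `A_⊥` terminating in `⊥`: pairwise distinct vertices, consecutive
edges of `A`, and the last vertex owned by player 0 (so it has the edge to `⊥`). -/
def AcyclicToBot (A : PGA V d) (L : List V) : Prop :=
  L.Nodup ∧ List.Chain' A.edge L ∧ ∀ b, L.getLast? = some b → A.owner b = 0


/-!
Cut cycles out of the play one at a time. A play repeating a vertex `a` has the shape
`P ++ a :: C ++ a :: D`. Since `τ` is memoryless, the lasso `P (a :: C)^ω` is an infinite play
from `s` consistent with `τ`, so player 0 loses it: the largest color on the cycle `a :: C` is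
odd, hence `℘(a :: C) ≺ 0`. As profiles add, removing the cycle strictly increases the profile,
and after finitely many cuts one reaches an acyclic path to `⊥`, whose profile is `≼ ℘̄`.
-/

theorem FinLt.trans {p q r : Fin d → ℤ} (hpq : FinLt p q) (hqr : FinLt q r) : FinLt p r := by
  obtain ⟨k, hne, hpq_above, hpq_k⟩ := hpq
  obtain ⟨l, hne', hqr_above, hqr_l⟩ := hqr
  rcases lt_trichotomy k l with hkl | rfl | hlk
  · refine ⟨l, ?_, fun j hj => ?_, ?_⟩
    · rwa [hpq_above l hkl]
    · rw [hpq_above j (hkl.trans hj), hqr_above j hj]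
    · rwa [hpq_above l hkl]
  · have habove : ∀ j, k < j → p j = r j := fun j hj => (hpq_above j hj).trans (hqr_above j hj)
    rcases hpq_k with ⟨he, h₁⟩ | ⟨ho, h₁⟩ <;> rcases hqr_l with ⟨he', h₂⟩ | ⟨ho', h₂⟩
    · exact ⟨k, by omega, habove, Or.inl ⟨he, h₁.trans h₂⟩⟩
    · exact absurd he (Nat.not_even_iff_odd.mpr ho')
    · exact absurd he' (Nat.not_even_iff_odd.mpr ho)
    · exact ⟨k, by omega, habove, Or.inr ⟨ho, h₂.trans h₁⟩⟩
  · refine ⟨k, ?_, fun j hj => ?_, ?_⟩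
    · rwa [← hqr_above k hlk]
    · rw [hpq_above j hj, hqr_above j (hlk.trans hj)]
    · rwa [← hqr_above k hlk]

theorem FinLt.trans_finLe {p q r : Fin d → ℤ} (hpq : FinLt p q) (hqr : FinLe q r) :
    FinLt p r := by
  rcases hqr with rfl | hqr
  exacts [hpq, hpq.trans hqr]

theorem FinLt.add_left {p q : Fin d → ℤ} (h : FinLt p q) (r : Fin d → ℤ) :
    FinLt (r + p) (r + q) := by
  obtain ⟨k, hne, habove, hk⟩ := h
  refine ⟨k, by simpa using hne, fun j hj => by simp [habove j hj], ?_⟩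
  simpa using hk

theorem finLt_zero_of_odd_of_pos {p : Fin d → ℤ} {k : Fin d} (hk : Odd (k : ℕ)) (hpos : 0 < p k)
    (habove : ∀ j, k < j → p j = 0) : FinLt p 0 :=
  ⟨k, hpos.ne', habove, Or.inr ⟨hk, hpos⟩⟩

theorem listProf_append (A : PGA V d) (l₁ l₂ : List V) :
    listProf A (l₁ ++ l₂) = listProf A l₁ + listProf A l₂ := by
  ext k
  simp [listProf]

theorem listProf_finLt_zero_of_odd_max (A : PGA V d) {C : List V} {v : V} (hv : v ∈ C)
    (hmax : ∀ w ∈ C, A.color w ≤ A.color v) (hodd : Odd (A.color v : ℕ)) :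
    FinLt (listProf A C) 0 := by
  refine finLt_zero_of_odd_of_pos hodd ?_ fun j hj => ?_
  · simpa [listProf] using ⟨v, hv, rfl⟩
  · simp only [listProf, Nat.cast_eq_zero, List.count_eq_zero, List.mem_map, not_exists, not_and]
    exact fun w hw hwj => (hmax w hw).not_gt (hwj ▸ hj)

theorem List.exists_eq_append_cons_append_cons_of_not_nodup {α : Type*} {l : List α}
    (h : ¬ l.Nodup) : ∃ P a C D, l = P ++ a :: C ++ a :: D := by
  induction l with
  | nil => exact absurd List.nodup_nil h
  | cons x t ih =>
    by_cases hx : x ∈ t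
    · obtain ⟨C, D, rfl⟩ := List.append_of_mem hx
      exact ⟨[], x, C, D, rfl⟩
    · obtain ⟨P, a, C, D, rfl⟩ := ih fun ht => h (List.nodup_cons.mpr ⟨hx, ht⟩)
      exact ⟨x :: P, a, C, D, rfl⟩

/-- Index of the `n`-th vertex of the lasso `l₀ ⋯ l_{k-1} (l_k ⋯ l_{k+p-1})^ω` in `l`. -/
def lassoIdx (k p n : ℕ) : ℕ := if n < k then n else k + (n - k) % p

theorem lassoIdx_lt {k p : ℕ} (hp : 0 < p) (n : ℕ) : lassoIdx k p n < k + p := by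
  unfold lassoIdx
  split_ifs
  · omega
  · have := Nat.mod_lt (n - k) hp; omega

theorem le_lassoIdx {k p n : ℕ} (hn : k ≤ n) : k ≤ lassoIdx k p n := by
  unfold lassoIdx
  split_ifs <;> omega

theorem lassoIdx_of_lt {k p n : ℕ} (hn : n < k + p) : lassoIdx k p n = n := by
  unfold lassoIdx
  split_ifs
  · rfl
  · rw [Nat.mod_eq_of_lt (by omega)]; omega

theorem lassoIdx_add_mul {k p n : ℕ} (hn : k ≤ n) (m : ℕ) :
    lassoIdx k p (n + m * p) = lassoIdx k p n := by
  unfold lassoIdx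
  rw [if_neg (by omega), if_neg (by omega), Nat.sub_add_comm hn, Nat.add_mul_mod_self_right]

theorem lassoIdx_succ {k p : ℕ} (hp : 0 < p) (n : ℕ) :
    lassoIdx k p (n + 1) =
      if lassoIdx k p n + 1 = k + p then k else lassoIdx k p n + 1 := by
  unfold lassoIdx
  by_cases hn : n < k
  · rw [if_pos hn, if_neg (show n + 1 ≠ k + p by omega)]
    by_cases hn' : n + 1 < k
    · rw [if_pos hn']
    · rw [if_neg hn', show n + 1 - k = 0 by omega, Nat.zero_mod]
      omega
  · have hr := Nat.mod_lt (n - k) hp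
    have hdiv := Nat.div_add_mod (n - k) p
    rw [if_neg hn, if_neg (by omega),
      show n + 1 - k = (n - k) % p + 1 + (n - k) / p * p by grind, Nat.add_mul_mod_self_right]
    split_ifs with h
    · rw [show (n - k) % p + 1 = p by omega, Nat.mod_self, add_zero]
    · rw [Nat.mod_eq_of_lt (by omega), add_assoc]

section Lasso

variable {α : Type*} (P : List α) (a : α) (C : List α)

def lasso (n : ℕ) : α := (P ++ a :: C).getD (lassoIdx P.length (C.length + 1) n) a

variable {P a C} in
theorem lasso_eq_getElem {n i : ℕ} (hi : lassoIdx P.length (C.length + 1) n = i)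
    (h : i < (P ++ a :: C).length) : lasso P a C n = (P ++ a :: C)[i] := by
  simp [lasso, hi, List.getElem?_eq_getElem h]

theorem lassoIdx_lt_length (n : ℕ) :
    lassoIdx P.length (C.length + 1) n < (P ++ a :: C).length := by
  simpa [← add_assoc] using lassoIdx_lt (k := P.length) (Nat.succ_pos C.length) n

theorem lasso_zero : lasso P a C 0 = (P ++ a :: C).head (by simp) := by
  rw [lasso_eq_getElem (lassoIdx_of_lt (by omega)) (by simp), List.head_eq_getElem]

theorem lasso_mem {n : ℕ} (hn : P.length ≤ n) : lasso P a C n ∈ a :: C := by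
  have hk := le_lassoIdx (p := C.length + 1) hn
  rw [lasso_eq_getElem rfl (lassoIdx_lt_length P a C n), List.getElem_append_right hk]
  exact List.getElem_mem _

theorem exists_lasso_eq {x : α} (hx : x ∈ a :: C) (N : ℕ) : ∃ n ≥ N, lasso P a C n = x := by
  obtain ⟨i, hi, rfl⟩ := List.getElem_of_mem hx
  refine ⟨P.length + i + N * (C.length + 1), by nlinarith, ?_⟩
  have hidx : lassoIdx P.length (C.length + 1) (P.length + i + N * (C.length + 1)) =
      P.length + i := by
    rw [lassoIdx_add_mul (Nat.le_add_right _ _), lassoIdx_of_lt (by simpa using hi)]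
  rw [lasso_eq_getElem hidx (by rw [List.length_append]; omega), List.getElem_append_right (by omega)]
  simp

theorem lasso_rel_succ {R : α → α → Prop} (h : List.IsChain R (P ++ a :: C ++ [a])) (n : ℕ) :
    R (lasso P a C n) (lasso P a C (n + 1)) := by
  set i := lassoIdx P.length (C.length + 1) n with hi
  have hlt : i < (P ++ a :: C).length := lassoIdx_lt_length P a C n
  have hstep := h.getElem i (by rw [List.length_append, List.length_singleton]; omega)
  have hsucc := lassoIdx_succ (k := P.length) (Nat.succ_pos C.length) n
  rw [lasso_eq_getElem hi.symm hlt]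
  rw [List.getElem_append_left hlt] at hstep
  by_cases hwrap : i + 1 = P.length + (C.length + 1)
  · rw [if_pos hwrap] at hsucc
    rw [lasso_eq_getElem hsucc (by simp)]
    simpa [List.getElem_append_right, hwrap] using hstep
  · rw [if_neg hwrap] at hsucc
    have hlt' : i + 1 < (P ++ a :: C).length := by
      simp only [List.length_append, List.length_cons] at hlt ⊢; omega
    rw [lasso_eq_getElem hsucc hlt']
    rwa [List.getElem_append_left hlt'] at hstep

end Lasso

theorem won0A_of_even_max_color_recurrent (A : PGA V d) {π : ℕ → V} {S : List V} {v : V}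
    (hS : ∃ N, ∀ n ≥ N, π n ∈ S) (hrec : ∀ x ∈ S, ∀ N, ∃ n ≥ N, π n = x) (hv : v ∈ S)
    (hmax : ∀ w ∈ S, A.color w ≤ A.color v) (heven : Even (A.color v : ℕ)) : Won0A A π := by
  obtain ⟨N₀, hN₀⟩ := hS
  refine ⟨A.color v, heven, fun N => ?_, fun j hj => ⟨N₀, fun n hn hcol => ?_⟩⟩
  · obtain ⟨n, hn, rfl⟩ := hrec v hv N
    exact ⟨n, hn, rfl⟩
  · exact (hmax _ (hN₀ n hn)).not_gt (hcol ▸ hj)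

def ConsistentMove (A : PGA V d) (τ : V → V → Prop) (u v : V) : Prop :=
  (A.owner u = 0 ∧ A.edge u v) ∨ (A.owner u = 1 ∧ τ u v)

theorem ConsistentMove.edge {A : PGA V d} {τ : V → V → Prop} (hτ : Strategy1 A τ) {u v : V}
    (h : ConsistentMove A τ u v) : A.edge u v :=
  h.elim And.right fun h => (hτ.1 u v h.2).2

theorem ConsistentMove.owner_imp {A : PGA V d} {τ : V → V → Prop} {u v : V}
    (h : ConsistentMove A τ u v) :
    (A.owner u = 0 → A.edge u v) ∧ (A.owner u = 1 → τ u v) := by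
  rcases h with ⟨h0, he⟩ | ⟨h1, hτ⟩
  · exact ⟨fun _ => he, fun h1 => absurd (h0.symm.trans h1) (by decide)⟩
  · exact ⟨fun h0 => absurd (h0.symm.trans h1) (by decide), fun _ => hτ⟩

theorem listProf_cycle_finLt_zero (A : PGA V d) {τ : V → V → Prop} {s : V}
    (hwin : ∀ π : ℕ → V,
      (π 0 = s ∧ ∀ n, (A.owner (π n) = 0 → A.edge (π n) (π (n + 1))) ∧
        (A.owner (π n) = 1 → τ (π n) (π (n + 1)))) → ¬ Won0A A π)
    {P : List V} {a : V} {C : List V} (hhead : (P ++ a :: C).head? = some s)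
    (hchain : List.IsChain (ConsistentMove A τ) (P ++ a :: C ++ [a])) :
    FinLt (listProf A (a :: C)) 0 := by
  obtain ⟨v, hv⟩ := Option.ne_none_iff_exists'.mp
    (mt List.argmax_eq_none.mp (List.cons_ne_nil a C) : (a :: C).argmax A.color ≠ none)
  have hmax : ∀ w ∈ a :: C, A.color w ≤ A.color v := fun w hw => List.le_of_mem_argmax hw hv
  refine listProf_finLt_zero_of_odd_max A (List.argmax_mem hv) hmax
    (Nat.not_even_iff_odd.mp fun heven => hwin (lasso P a C) ⟨?_, fun n => ?_⟩ ?_)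
  · rw [lasso_zero, List.head_eq_iff_head?_eq_some]
    exact hhead
  · exact (lasso_rel_succ P a C hchain n).owner_imp
  · exact won0A_of_even_max_color_recurrent A ⟨P.length, fun n => lasso_mem P a C⟩
      (fun _ => exists_lasso_eq P a C) (List.argmax_mem hv) hmax heven

theorem listProf_finLe_of_cycles_finLt_zero (A : PGA V d) {R : V → V → Prop} {B : V → Prop}
    {s : V} {pbar : Fin d → ℤ}
    (hsimple : ∀ L, L.Nodup → List.IsChain R L → (∀ b, L.getLast? = some b → B b) →
      FinLe (listProf A L) pbar)
    (hcycle : ∀ P a C, (P ++ a :: C).head? = some s → List.IsChain R (P ++ a :: C ++ [a]) →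
      FinLt (listProf A (a :: C)) 0)
    (L : List V) (hhead : L.head? = some s) (hchain : List.IsChain R L)
    (hlast : ∀ b, L.getLast? = some b → B b) : FinLe (listProf A L) pbar := by
  induction hlen : L.length using Nat.strong_induction_on generalizing L with
  | _ n ih =>
  by_cases hnd : L.Nodup
  · exact hsimple L hnd hchain hlast
  obtain ⟨P, a, C, D, rfl⟩ := List.exists_eq_append_cons_append_cons_of_not_nodup hnd
  obtain ⟨hlasso, htail⟩ := List.isChain_split.mp hchain
  have hstem : List.IsChain R (P ++ [a]) := by
    rw [List.append_assoc, List.cons_append] at hlasso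
    exact (List.isChain_split.mp hlasso).1
  have hprof : listProf A (P ++ a :: C ++ a :: D) =
      listProf A (P ++ a :: D) + listProf A (a :: C) := by
    simp only [listProf_append]
    abel
  have hshortcut : FinLe (listProf A (P ++ a :: D)) pbar := by
    refine ih _ ?_ _ ?_ (List.isChain_split.mpr ⟨hstem, htail⟩) ?_ rfl
    · simp [← hlen]
    · cases P <;> simpa using hhead
    · simpa [List.getLast?_cons, List.getLast?_append] using hlast
  have hcyc : FinLt (listProf A (a :: C)) 0 :=
    hcycle P a C (by cases P <;> simpa using hhead) hlasso
  rw [hprof]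
  exact Or.inr ((hcyc.add_left _).trans_finLe (by simpa using hshortcut))

theorem player1_winning_strategy_bounds_escape_general {V : Type} {d : ℕ}
    (A : PGA V d) (pbar : Fin d → ℤ)
    (hmax : ∀ L, AcyclicToBot A L → FinLe (listProf A L) pbar)
    (τ : V → V → Prop) (s : V)
    (hτ : Strategy1 A τ)
    (hwin : ∀ π : ℕ → V,
      (π 0 = s ∧ ∀ n, (A.owner (π n) = 0 → A.edge (π n) (π (n + 1))) ∧
        (A.owner (π n) = 1 → τ (π n) (π (n + 1)))) → ¬ Won0A A π)
    (L : List V) (hhead : L.head? = some s)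
    (hchain : List.Chain'
      (fun u v => (A.owner u = 0 ∧ A.edge u v) ∨ (A.owner u = 1 ∧ τ u v)) L)
    (hlast : ∀ b, L.getLast? = some b → A.owner b = 0) :
    FinLe (listProf A L) pbar :=
  listProf_finLe_of_cycles_finLt_zero A
    (fun M hnd hM hlastM => hmax M ⟨hnd, hM.imp fun _ _ => ConsistentMove.edge hτ, hlastM⟩)
    (fun _ _ _ => listProf_cycle_finLt_zero A hwin) L hhead hchain hlast

/-- If player 1 uses a (memoryless) parity-game winning strategy `τ`
from a node `s` in his winning set, then every finite play in the escape arena starting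
at `s`, consistent with `τ`, and ending in `⊥` has profile `≼ ℘̄`, the `≺`-maximal value
of an acyclic path ending in `⊥`. -/
theorem player1_winning_strategy_bounds_escape {V : Type} {d : ℕ} [Fintype V]
    (A : PGA V d) (pbar : Fin d → ℤ)
    (hmem : ∃ L, AcyclicToBot A L ∧ listProf A L = pbar)
    (hmax : ∀ L, AcyclicToBot A L → FinLe (listProf A L) pbar)
    (τ : V → V → Prop) (s : V)
    (hτ : Strategy1 A τ)
    (hwin : ∀ π : ℕ → V,
      (π 0 = s ∧ ∀ n, (A.owner (π n) = 0 → A.edge (π n) (π (n + 1))) ∧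
        (A.owner (π n) = 1 → τ (π n) (π (n + 1)))) → ¬ Won0A A π)
    (L : List V) (hne : L ≠ []) (hhead : L.head? = some s)
    (hchain : List.Chain'
      (fun u v => (A.owner u = 0 ∧ A.edge u v) ∨ (A.owner u = 1 ∧ τ u v)) L)
    (hlast : ∀ b, L.getLast? = some b → A.owner b = 0) :
    FinLe (listProf A L) pbar :=
  player1_winning_strategy_bounds_escape_general A pbar hmax τ s hτ hwin L hhead hchain hlast
end

section
/- The all-improvements strategy I_σ is locally optimal: for a reasonable strategy σ, every direct improvement σ' ⊆ I_σ satisfies V_{σ'}(s) ≼ V_{I_σ}(s) for all nodes s. -/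
open scoped Classical

variable {V : Type} {d : ℕ}

/-! ### Auxiliary order lemmas -/

theorem finLt_trans {d : ℕ} {p q r : Fin d → ℤ} (h1 : FinLt p q) (h2 : FinLt q r) :
    FinLt p r := by
  obtain ⟨k1, hne1, hup1, hc1⟩ := h1
  obtain ⟨k2, hne2, hup2, hc2⟩ := h2
  rcases lt_trichotomy k1 k2 with hlt | heq | hgt
  · refine ⟨k2, ?_, ?_, ?_⟩
    · rw [hup1 k2 hlt]; exact hne2
    · intro j hj; rw [hup1 j (lt_trans hlt hj), hup2 j hj]
    · rw [hup1 k2 hlt]; exact hc2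
  · subst heq
    refine ⟨k1, ?_, fun j hj => (hup1 j hj).trans (hup2 j hj), ?_⟩
    · rcases hc1 with ⟨he, h1'⟩ | ⟨ho, h1'⟩
      · rcases hc2 with ⟨_, h2'⟩ | ⟨ho, _⟩
        · exact ne_of_lt (h1'.trans h2')
        · exact absurd ho (Nat.not_odd_iff_even.mpr he)
      · rcases hc2 with ⟨he, _⟩ | ⟨_, h2'⟩
        · exact absurd he (Nat.not_even_iff_odd.mpr ho)
        · exact ne_of_gt (h2'.trans h1')
    · rcases hc1 with ⟨he, h1'⟩ | ⟨ho, h1'⟩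
      · rcases hc2 with ⟨_, h2'⟩ | ⟨ho, _⟩
        · exact Or.inl ⟨he, h1'.trans h2'⟩
        · exact absurd ho (Nat.not_odd_iff_even.mpr he)
      · rcases hc2 with ⟨he, _⟩ | ⟨_, h2'⟩
        · exact absurd he (Nat.not_even_iff_odd.mpr ho)
        · exact Or.inr ⟨ho, h2'.trans h1'⟩
  · refine ⟨k1, ?_, ?_, ?_⟩
    · rw [hup2 k1 hgt] at hne1; exact hne1
    · intro j hj; rw [hup1 j hj, hup2 j (lt_trans hgt hj)]
    · rw [← hup2 k1 hgt]; exact hc1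

theorem finLt_total {d : ℕ} {p q : Fin d → ℤ} (h : p ≠ q) : FinLt p q ∨ FinLt q p := by
  have hne : (Finset.univ.filter (fun k => p k ≠ q k)).Nonempty := by
    by_contra hc
    apply h
    funext k
    by_contra hk
    exact hc ⟨k, Finset.mem_filter.mpr ⟨Finset.mem_univ k, hk⟩⟩
  set S := Finset.univ.filter (fun k => p k ≠ q k) with hS
  obtain ⟨hkmem⟩ : ∃ _ : S.max' hne ∈ S, True := ⟨S.max'_mem hne, trivial⟩
  set k := S.max' hne with hk
  have hkne : p k ≠ q k := (Finset.mem_filter.mp hkmem).2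
  have hup : ∀ j, k < j → p j = q j := by
    intro j hj
    by_contra hj'
    exact absurd (S.le_max' j (Finset.mem_filter.mpr ⟨Finset.mem_univ j, hj'⟩))
      (not_le_of_gt hj)
  rcases Nat.even_or_odd (k : ℕ) with he | ho
  · rcases lt_or_gt_of_ne hkne with hlt | hgt
    · exact Or.inl ⟨k, hkne, hup, Or.inl ⟨he, hlt⟩⟩
    · exact Or.inr ⟨k, hkne.symm, fun j hj => (hup j hj).symm, Or.inl ⟨he, hgt⟩⟩
  · rcases lt_or_gt_of_ne hkne with hlt | hgt
    · exact Or.inr ⟨k, hkne.symm, fun j hj => (hup j hj).symm, Or.inr ⟨ho, hlt⟩⟩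
    · exact Or.inl ⟨k, hkne, hup, Or.inr ⟨ho, hgt⟩⟩

theorem profLt_trans {d : ℕ} {p q r : Prof d} (h1 : Prof.Lt p q) (h2 : Prof.Lt q r) :
    Prof.Lt p r := by
  cases p <;> cases q <;> cases r <;>
    simp only [Prof.Lt] at * <;> first | trivial | exact finLt_trans h1 h2

theorem profLe_trans {d : ℕ} {p q r : Prof d} (h1 : Prof.Le p q) (h2 : Prof.Le q r) :
    Prof.Le p r := by
  rcases h1 with rfl | h1
  · exact h2
  rcases h2 with rfl | h2
  · exact Or.inr h1
  · exact Or.inr (profLt_trans h1 h2)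

theorem profLe_refl {d : ℕ} (p : Prof d) : Prof.Le p p := Or.inl rfl

theorem profLe_top {d : ℕ} (p : Prof d) : Prof.Le p Prof.top := by
  cases p
  · exact Or.inr trivial
  · exact Or.inr trivial
  · exact Or.inl rfl

theorem profLe_bot {d : ℕ} (p : Prof d) : Prof.Le Prof.bot p := by
  cases p
  · exact Or.inl rfl
  · exact Or.inr trivial
  · exact Or.inr trivial

theorem profLe_total {d : ℕ} (p q : Prof d) : Prof.Le p q ∨ Prof.Le q p := by
  by_cases h : p = q
  · exact Or.inl (Or.inl h)
  cases p with
  | bot => exact Or.inl (profLe_bot q)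
  | top => exact Or.inr (profLe_top q)
  | fin f =>
    cases q with
    | bot => exact Or.inr (Or.inr trivial)
    | top => exact Or.inl (Or.inr trivial)
    | fin g =>
      have hfg : f ≠ g := fun hf => h (by rw [hf])
      rcases finLt_total hfg with h' | h'
      · exact Or.inl (Or.inr h')
      · exact Or.inr (Or.inr h')

theorem eq_top_of_top_le {d : ℕ} {p : Prof d} (h : Prof.Le Prof.top p) : p = Prof.top := by
  rcases h with h | h
  · exact h.symm
  · cases p <;> exact absurd h not_false

/-! ### Play machinery -/

theorem fin_two_ne_zero {i : Fin 2} (h : i ≠ 0) : i = 1 := by omega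

/-- A default next move respecting the strategies. -/
noncomputable def nextStep {V : Type} {d : ℕ} (A : PGA V d) (σ : V → Option V → Prop)
    (τ : V → V → Prop) (hσ : Strategy0 A σ) (hτ : Strategy1 A τ) : Option V → Option V :=
  fun o => match o with
  | none => none
  | some u =>
    if h : A.owner u = 0 then Classical.choose (hσ.2 u h)
    else some (Classical.choose (hτ.2 u (fin_two_ne_zero h)))

theorem nextStep_spec {V : Type} {d : ℕ} (A : PGA V d) (σ : V → Option V → Prop)
    (τ : V → V → Prop) (hσ : Strategy0 A σ) (hτ : Strategy1 A τ) (o : Option V) :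
    PlayStep A σ τ o (nextStep A σ τ hσ hτ o) := by
  cases o with
  | none => rfl
  | some u =>
    by_cases h : A.owner u = 0
    · simp only [nextStep, dif_pos h]
      exact Or.inl ⟨h, Classical.choose_spec (hσ.2 u h)⟩
    · simp only [nextStep, dif_neg h]
      exact Or.inr ⟨fin_two_ne_zero h, _, rfl, Classical.choose_spec (hτ.2 u (fin_two_ne_zero h))⟩

theorem play_exists {V : Type} {d : ℕ} (A : PGA V d) (σ : V → Option V → Prop)
    (τ : V → V → Prop) (hσ : Strategy0 A σ) (hτ : Strategy1 A τ) (s : V) :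
    ∃ π, IsPlay A σ τ s π := by
  refine ⟨fun n => (nextStep A σ τ hσ hτ)^[n] (some s), rfl, fun n => ?_⟩
  simp only []
  rw [Function.iterate_succ_apply']
  exact nextStep_spec A σ τ hσ hτ _

theorem play_mono {V : Type} {d : ℕ} {A : PGA V d} {σ1 σ2 : V → Option V → Prop}
    {τ : V → V → Prop} (hsub : ∀ u t, σ1 u t → σ2 u t) {s : V} {π : ℕ → Option V}
    (hπ : IsPlay A σ1 τ s π) : IsPlay A σ2 τ s π := by
  refine ⟨hπ.1, fun n => ?_⟩
  have h := hπ.2 n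
  cases hn : π n with
  | none => rw [hn] at h; exact h
  | some u =>
    rw [hn] at h
    rcases h with ⟨h0, h1⟩ | h
    · exact Or.inl ⟨h0, hsub _ _ h1⟩
    · exact Or.inr h

theorem playValue_of_none {V : Type} {d : ℕ} (A : PGA V d) (π : ℕ → Option V)
    (h : ∃ n, π n = none) :
    PlayValue A π = .fin (fun k =>
      (((Finset.range (Nat.find h)).filter (fun n => ColorAt A π n k)).card : ℤ)) := by
  rw [PlayValue, dif_pos h]

theorem playValue_of_won {V : Type} {d : ℕ} (A : PGA V d) (π : ℕ → Option V)
    (h : ¬∃ n, π n = none) (hw : Won0B A π) : PlayValue A π = .top := by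
  rw [PlayValue, dif_neg h, if_pos hw]

theorem playValue_of_lost {V : Type} {d : ℕ} (A : PGA V d) (π : ℕ → Option V)
    (h : ¬∃ n, π n = none) (hw : ¬Won0B A π) : PlayValue A π = .bot := by
  rw [PlayValue, dif_neg h, if_neg hw]

/-! ### Cycle elimination -/

theorem cycle_elim {V : Type} {d : ℕ} (A : PGA V d) (σ : V → Option V → Prop)
    (τ : V → V → Prop) (s : V) (π : ℕ → Option V)
    (hπ : IsPlay A σ τ s π) (h : ∃ n, π n = none) {i j : ℕ} (hij : i < j)
    (hjN : j < Nat.find h) (heq : π i = π j) :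
    (∃ ρ, IsPlay A σ τ s ρ ∧ PlayValue A ρ = .top) ∨
    (∃ ρ, IsPlay A σ τ s ρ ∧ ∃ h' : ∃ n, ρ n = none,
      Nat.find h' + (j - i) = Nat.find h ∧ Prof.Lt (PlayValue A π) (PlayValue A ρ)) := by
  haveI : Inhabited V := ⟨s⟩
  set N := Nat.find h with hNdef
  have hlt : ∀ n, n < N → π n ≠ none := fun n hn => Nat.find_min h hn
  have hsome : ∀ n, n < N → π n = some ((π n).iget) := by
    intro n hn
    cases hn' : π n with
    | none => exact absurd hn' (hlt n hn)
    | some v => simp [hn']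
  set col : ℕ → Fin d := fun n => A.color ((π n).iget) with hcol
  have hColorAt : ∀ n, n < N → ∀ k, ColorAt A π n k ↔ col n = k := by
    intro n hn k
    constructor
    · rintro ⟨v, hv, hc⟩
      simp only [hcol, hv, Option.iget_some]
      exact hc
    · intro hc
      exact ⟨(π n).iget, hsome n hn, hc⟩
  set m := j - i with hmdef
  have hm0 : 0 < m := Nat.sub_pos_of_lt hij
  have him : i + m = j := Nat.add_sub_cancel' (le_of_lt hij)
  have hCne : ((Finset.Ico i j).image col).Nonempty :=
    ⟨col i, Finset.mem_image_of_mem col (Finset.mem_Ico.mpr ⟨le_refl i, hij⟩)⟩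
  set K := ((Finset.Ico i j).image col).max' hCne with hKdef
  have hKmax : ∀ n, i ≤ n → n < j → col n ≤ K := fun n h1 h2 =>
    Finset.le_max' _ _ (Finset.mem_image_of_mem col (Finset.mem_Ico.mpr ⟨h1, h2⟩))
  obtain ⟨n', hn'mem, hn'col⟩ :=
    Finset.mem_image.mp (((Finset.Ico i j).image col).max'_mem hCne)
  obtain ⟨hin', hn'j⟩ := Finset.mem_Ico.mp hn'mem
  have hstep := hπ.2
  have hmodsucc : ∀ a : ℕ, (a + 1) % m = if (a % m) + 1 = m then 0 else (a % m) + 1 := by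
    intro a
    conv_lhs => rw [← Nat.mod_add_div a m, Nat.add_right_comm, Nat.add_mul_mod_self_left]
    split
    · next h' => rw [h']; exact Nat.mod_self m
    · next h' => exact Nat.mod_eq_of_lt (by have := Nat.mod_lt a hm0; omega)
  rcases Nat.even_or_odd (K : ℕ) with hEv | hOd
  · -- even dominating color: loop forever, get a won infinite play
    left
    set ρ : ℕ → Option V := fun n => if n < i then π n else π (i + (n - i) % m) with hρ
    have hidx : ∀ n : ℕ, i + (n - i) % m < j := by
      intro n; have := Nat.mod_lt (n - i) hm0; omega
    have hρeq : ∀ n, ¬ n < i → ρ n = π (i + (n - i) % m) := by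
      intro n hn; rw [hρ]; simp only [if_neg hn]
    have hρeq' : ∀ n, n < i → ρ n = π n := by
      intro n hn; rw [hρ]; simp only [if_pos hn]
    have hρsome : ∀ n, ρ n ≠ none := by
      intro n
      by_cases hn : n < i
      · rw [hρeq' n hn]; exact hlt n (by omega)
      · rw [hρeq n hn]; exact hlt _ (by have := hidx n; omega)
    have hplay : IsPlay A σ τ s ρ := by
      constructor
      · by_cases h0 : 0 < i
        · rw [hρeq' 0 h0]; exact hπ.1
        · have hi0 : i = 0 := by omega
          rw [hρeq 0 (by omega)]
          subst hi0
          simpa using hπ.1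
      · intro n
        by_cases hn1 : n + 1 < i
        · rw [hρeq' n (by omega), hρeq' (n+1) hn1]; exact hstep n
        · by_cases hn : n < i
          · -- n + 1 = i
            have hni : n + 1 = i := by omega
            have : ρ (n + 1) = π (n + 1) := by
              rw [hρeq (n+1) hn1, hni]
              simp
            rw [hρeq' n hn, this]
            exact hstep n
          · -- n ≥ i
            rw [hρeq n hn, hρeq (n+1) (by omega)]
            have harith : n + 1 - i = (n - i) + 1 := by omega
            rw [harith, hmodsucc (n - i)]
            by_cases hr : (n - i) % m + 1 = m
            · simp only [if_pos hr]
              have h1 : i + (n - i) % m + 1 = j := by omega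
              have := hstep (i + (n - i) % m)
              rw [h1] at this
              rw [← heq] at this
              simpa using this
            · simp only [if_neg hr]
              have := hstep (i + (n - i) % m)
              have h1 : i + (n - i) % m + 1 = i + ((n - i) % m + 1) := by omega
              rw [h1] at this
              exact this
    have hnone : ¬∃ n, ρ n = none := by
      rintro ⟨n, hn⟩; exact hρsome n hn
    have hwon : Won0B A ρ := by
      refine ⟨K, hEv, ?_, ?_⟩
      · intro M
        have hMm : M ≤ m * M := Nat.le_mul_of_pos_left M hm0
        refine ⟨i + (n' - i) + m * M, by omega, ?_⟩
        have hrn : ρ (i + (n' - i) + m * M) = π n' := by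
          rw [hρeq _ (by omega)]
          have h1 : i + (n' - i) + m * M - i = (n' - i) + m * M := by omega
          rw [h1, Nat.add_mul_mod_self_left, Nat.mod_eq_of_lt (by omega)]
          congr 1
          omega
        refine ⟨(π n').iget, ?_, ?_⟩
        · rw [hrn]; exact hsome n' (by omega)
        · exact hn'col
      · intro l hl
        refine ⟨i, fun n hn hC => ?_⟩
        obtain ⟨v, hv, hc⟩ := hC
        rw [hρeq n (by omega)] at hv
        have hcoll : col (i + (n - i) % m) = l := by
          simp only [hcol, hv, Option.iget_some]; exact hc
        have hle : l ≤ K := hcoll ▸ hKmax _ (Nat.le_add_right _ _) (hidx n)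
        exact absurd hl (not_lt_of_ge hle)
    exact ⟨ρ, hplay, playValue_of_won A ρ hnone hwon⟩
  · -- odd dominating color: cut out the cycle, value strictly increases
    right
    set ρ : ℕ → Option V := fun n => if n < i then π n else π (n + m) with hρ
    have hρeq : ∀ n, ¬ n < i → ρ n = π (n + m) := by
      intro n hn; rw [hρ]; simp only [if_neg hn]
    have hρeq' : ∀ n, n < i → ρ n = π n := by
      intro n hn; rw [hρ]; simp only [if_pos hn]
    have hplay : IsPlay A σ τ s ρ := by
      constructor
      · by_cases h0 : 0 < i
        · rw [hρeq' 0 h0]; exact hπ.1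
        · have hi0 : i = 0 := by omega
          rw [hρeq 0 (by omega)]
          have : 0 + m = j := by omega
          rw [this, ← heq, hi0]
          exact hπ.1
      · intro n
        by_cases hn1 : n + 1 < i
        · rw [hρeq' n (by omega), hρeq' (n+1) hn1]; exact hstep n
        · by_cases hn : n < i
          · have hni : n + 1 = i := by omega
            have hr : ρ (n + 1) = π (n + 1) := by
              rw [hρeq (n+1) hn1, hni, him, ← heq]
            rw [hρeq' n hn, hr]
            exact hstep n
          · rw [hρeq n hn, hρeq (n+1) (by omega)]
            have h1 : n + 1 + m = (n + m) + 1 := by omega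
            rw [h1]
            exact hstep (n + m)
    have hjN' : j ≤ N := le_of_lt hjN
    have hnone' : ρ (N - m) = none := by
      rw [hρeq (N - m) (by omega)]
      have : N - m + m = N := by omega
      rw [this]
      exact Nat.find_spec h
    have h' : ∃ n, ρ n = none := ⟨N - m, hnone'⟩
    have hfind : Nat.find h' = N - m := by
      rw [Nat.find_eq_iff]
      refine ⟨hnone', fun n hn => ?_⟩
      intro hc
      by_cases hni : n < i
      · rw [hρeq' n hni] at hc
        exact hlt n (by omega) hc
      · rw [hρeq n hni] at hc
        exact hlt (n + m) (by omega) hc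
    -- counting
    have hcount : ∀ k, ((Finset.range N).filter (fun n => ColorAt A π n k)).card
        = ((Finset.range (N - m)).filter (fun n => ColorAt A ρ n k)).card
          + ((Finset.Ico i j).filter (fun n => ColorAt A π n k)).card := by
      intro k
      have hsplit1 : Finset.range N =
          Finset.Ico 0 i ∪ Finset.Ico i j ∪ Finset.Ico j N := by
        rw [Finset.range_eq_Ico, Finset.Ico_union_Ico_eq_Ico (by omega) (by omega),
          Finset.Ico_union_Ico_eq_Ico (by omega) (by omega)]
      have hsplit2 : Finset.range (N - m) = Finset.Ico 0 i ∪ Finset.Ico i (N - m) := by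
        rw [Finset.range_eq_Ico, Finset.Ico_union_Ico_eq_Ico (by omega) (by omega)]
      rw [hsplit1, hsplit2, Finset.filter_union, Finset.filter_union, Finset.filter_union,
        Finset.card_union_of_disjoint, Finset.card_union_of_disjoint,
        Finset.card_union_of_disjoint]
      · have e1 : (Finset.Ico 0 i).filter (fun n => ColorAt A ρ n k)
            = (Finset.Ico 0 i).filter (fun n => ColorAt A π n k) := by
          apply Finset.filter_congr
          intro x hx
          rw [Finset.mem_Ico] at hx
          simp only [ColorAt, hρeq' x hx.2]
        have e2 : ((Finset.Ico i (N - m)).filter (fun n => ColorAt A ρ n k)).card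
            = ((Finset.Ico j N).filter (fun n => ColorAt A π n k)).card := by
          apply Finset.card_bij' (fun n _ => n + m) (fun n _ => n - m)
          · intro a ha
            rw [Finset.mem_filter, Finset.mem_Ico] at ha ⊢
            refine ⟨⟨by omega, by omega⟩, ?_⟩
            have h2 := ha.2
            simp only [ColorAt] at h2 ⊢
            rw [hρeq a (by omega)] at h2
            exact h2
          · intro a ha
            rw [Finset.mem_filter, Finset.mem_Ico] at ha ⊢
            refine ⟨⟨by omega, by omega⟩, ?_⟩
            have h2 := ha.2
            simp only [ColorAt] at h2 ⊢
            rw [hρeq (a - m) (by omega)]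
            have he : a - m + m = a := by omega
            rw [he]
            exact h2
          · intro a _; omega
          · intro a ha; rw [Finset.mem_filter, Finset.mem_Ico] at ha; omega
        rw [e1, e2]
        ring
      · exact Finset.disjoint_filter_filter (Finset.Ico_disjoint_Ico_consecutive 0 i (N - m))
      · exact Finset.disjoint_filter_filter (Finset.Ico_disjoint_Ico_consecutive 0 i j)
      · rw [← Finset.filter_union]
        apply Finset.disjoint_filter_filter
        apply Finset.disjoint_left.mpr
        intro a ha hb
        rw [Finset.mem_union, Finset.mem_Ico, Finset.mem_Ico] at ha
        rw [Finset.mem_Ico] at hb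
        omega
    have hmid0 : ∀ l, K < l → ((Finset.Ico i j).filter (fun n => ColorAt A π n l)).card = 0 := by
      intro l hl
      rw [Finset.card_eq_zero, Finset.filter_eq_empty_iff]
      intro n hn
      rw [Finset.mem_Ico] at hn
      intro hC
      have hcoll : col n = l := (hColorAt n (by omega) l).mp hC
      have hle : l ≤ K := hcoll ▸ hKmax n hn.1 hn.2
      exact absurd hl (not_lt_of_ge hle)
    have hmidK : 0 < ((Finset.Ico i j).filter (fun n => ColorAt A π n K)).card := by
      rw [Finset.card_pos]
      refine ⟨n', Finset.mem_filter.mpr ⟨Finset.mem_Ico.mpr ⟨hin', hn'j⟩, ?_⟩⟩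
      exact (hColorAt n' (by omega) K).mpr hn'col
    refine ⟨ρ, hplay, h', by omega, ?_⟩
    rw [playValue_of_none A π h, playValue_of_none A ρ h', hfind, ← hNdef]
    show FinLt _ _
    refine ⟨K, ?_, ?_, Or.inr ⟨hOd, ?_⟩⟩
    · have h1 := hmidK
      simp only []
      rw [hcount K]
      push_cast
      omega
    · intro l hl
      simp only []
      rw [hcount l, hmid0 l hl]
      push_cast
      ring
    · have h1 := hmidK
      simp only []
      rw [hcount K]
      push_cast
      omega

/-! ### Reduction to short plays and existence of maxima -/

theorem play_reduce {V : Type} {d : ℕ} [Fintype V] (A : PGA V d) (σ : V → Option V → Prop)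
    (τ : V → V → Prop) (s : V)
    (htop : ∀ ρ, IsPlay A σ τ s ρ → PlayValue A ρ ≠ .top) :
    ∀ N (π : ℕ → Option V), IsPlay A σ τ s π → ∀ h : (∃ n, π n = none), Nat.find h = N →
    ∃ ρ, IsPlay A σ τ s ρ ∧ ∃ h' : (∃ n, ρ n = none),
      Nat.find h' ≤ Fintype.card V ∧ Prof.Le (PlayValue A π) (PlayValue A ρ) := by
  intro N
  induction N using Nat.strong_induction_on with
  | _ N ih =>
    intro π hπ h hN
    by_cases hdup : ∃ i j, i < j ∧ j < Nat.find h ∧ π i = π j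
    · obtain ⟨i, j, hij, hjN, heq⟩ := hdup
      rcases cycle_elim A σ τ s π hπ h hij hjN heq with
        ⟨ρ, hρ, htopv⟩ | ⟨ρ, hρ, h', hfind, hlt⟩
      · exact absurd htopv (htop ρ hρ)
      · obtain ⟨ρ2, hρ2, h2, hcard, hle⟩ := ih (Nat.find h') (by omega) ρ hρ h' rfl
        exact ⟨ρ2, hρ2, h2, hcard, profLe_trans (Or.inr hlt) hle⟩
    · haveI : Inhabited V := ⟨s⟩
      have hsome : ∀ n, n < Nat.find h → π n = some ((π n).iget) := by
        intro n hn
        cases hn' : π n with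
        | none => exact absurd hn' (Nat.find_min h hn)
        | some v => simp [hn']
      have hinj : Set.InjOn (fun n => (π n).iget) (Finset.range (Nat.find h)) := by
        intro a ha b hb hab
        simp only [Finset.coe_range, Set.mem_Iio] at ha hb
        simp only [] at hab
        by_contra hne
        rcases Nat.lt_or_ge a b with hlt' | hge
        · exact hdup ⟨a, b, hlt', hb, by rw [hsome a ha, hsome b hb, hab]⟩
        · have hlt'' : b < a := by omega
          exact hdup ⟨b, a, hlt'', ha, by rw [hsome a ha, hsome b hb, hab]⟩
      have hcard : Nat.find h ≤ Fintype.card V := by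
        have := Finset.card_le_card_of_injOn (fun n => (π n).iget)
          (fun x _ => Finset.mem_univ _) hinj
        simpa using this
      exact ⟨π, hπ, h, hcard, profLe_refl _⟩

theorem finset_exists_max {α : Type} (R : α → α → Prop)
    (htot : ∀ p q, R p q ∨ R q p) (htrans : ∀ p q r, R p q → R q r → R p r)
    (t : Finset α) : t.Nonempty → ∃ m ∈ t, ∀ x ∈ t, R x m := by
  classical
  induction t using Finset.induction_on with
  | empty => intro hne; exact absurd hne (by simp)
  | @insert a s ha ih =>
    intro _
    by_cases hs : s.Nonempty
    · obtain ⟨m, hm, hmax⟩ := ih hs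
      rcases htot m a with h1 | h1
      · refine ⟨a, Finset.mem_insert_self a s, fun x hx => ?_⟩
        rcases Finset.mem_insert.mp hx with rfl | hx
        · rcases htot x x with h2 | h2 <;> exact h2
        · exact htrans x m a (hmax x hx) h1
      · refine ⟨m, Finset.mem_insert_of_mem hm, fun x hx => ?_⟩
        rcases Finset.mem_insert.mp hx with rfl | hx
        · exact h1
        · exact hmax x hx
    · have hs0 : s = ∅ := Finset.not_nonempty_iff_eq_empty.mp hs
      subst hs0
      refine ⟨a, Finset.mem_insert_self a ∅, fun x hx => ?_⟩
      rcases Finset.mem_insert.mp hx with rfl | hx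
      · rcases htot x x with h2 | h2 <;> exact h2
      · simp at hx

theorem set_exists_max {α : Type} (R : α → α → Prop)
    (htot : ∀ p q, R p q ∨ R q p) (htrans : ∀ p q r, R p q → R q r → R p r)
    {S : Set α} (hfin : S.Finite) (hne : S.Nonempty) : ∃ m ∈ S, ∀ x ∈ S, R x m := by
  obtain ⟨m, hm, hmax⟩ := finset_exists_max R htot htrans hfin.toFinset
    ((Set.Finite.toFinset_nonempty hfin).mpr hne)
  exact ⟨m, (Set.Finite.mem_toFinset hfin).mp hm,
    fun x hx => hmax x ((Set.Finite.mem_toFinset hfin).mpr hx)⟩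

theorem exists_max_play {V : Type} {d : ℕ} [Fintype V] (A : PGA V d)
    (σ : V → Option V → Prop) (τ : V → V → Prop)
    (hσ : Strategy0 A σ) (hτ : Strategy1 A τ) (s : V)
    (htop : ∀ ρ, IsPlay A σ τ s ρ → PlayValue A ρ ≠ .top) :
    ∃ m, IsMaxOf {q | ∃ π, IsPlay A σ τ s π ∧ q = PlayValue A π} m := by
  classical
  set P := {q | ∃ π, IsPlay A σ τ s π ∧ q = PlayValue A π} with hP
  obtain ⟨π0, hπ0⟩ := play_exists A σ τ hσ hτ s
  have hPne : PlayValue A π0 ∈ P := ⟨π0, hπ0, rfl⟩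
  set B : Set (Prof d) :=
    Prof.fin '' (Set.pi Set.univ fun _ : Fin d => Set.Icc (0:ℤ) (Fintype.card V)) with hB
  have hBfin : B.Finite := Set.Finite.image _ (Set.Finite.pi fun _ => Set.finite_Icc _ _)
  have hFfin : (P ∩ B).Finite := hBfin.subset Set.inter_subset_right
  have hbound : ∀ ρ, IsPlay A σ τ s ρ → ∀ h' : (∃ n, ρ n = none),
      Nat.find h' ≤ Fintype.card V → PlayValue A ρ ∈ B := by
    intro ρ hρ h' hcard
    rw [playValue_of_none A ρ h']
    refine ⟨_, fun k _ => ⟨Int.ofNat_nonneg _, ?_⟩, rfl⟩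
    exact_mod_cast le_trans (Finset.card_filter_le _ _) (by simpa using hcard)
  have hkey : ∀ q ∈ P, q = Prof.bot ∨ ∃ r ∈ P ∩ B, Prof.Le q r := by
    rintro q ⟨π, hπ, rfl⟩
    by_cases hfin : ∃ n, π n = none
    · obtain ⟨ρ, hρ, h', hcard, hle⟩ := play_reduce A σ τ s htop (Nat.find hfin) π hπ hfin rfl
      exact Or.inr ⟨PlayValue A ρ, ⟨⟨ρ, hρ, rfl⟩, hbound ρ hρ h' hcard⟩, hle⟩
    · by_cases hw : Won0B A π
      · exact absurd (playValue_of_won A π hfin hw) (htop π hπ)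
      · exact Or.inl (playValue_of_lost A π hfin hw)
  by_cases hFne : (P ∩ B).Nonempty
  · obtain ⟨m, hm, hmax⟩ := set_exists_max Prof.Le profLe_total
      (fun _ _ _ h1 h2 => profLe_trans h1 h2) hFfin hFne
    refine ⟨m, hm.1, ?_⟩
    intro q hq
    rcases hkey q hq with rfl | ⟨r, hr, hle⟩
    · exact profLe_bot m
    · exact profLe_trans hle (hmax r hr)
  · have hb : PlayValue A π0 = Prof.bot := by
      rcases hkey _ hPne with hb | ⟨r, hr, _⟩
      · exact hb
      · exact absurd ⟨r, hr⟩ hFne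
    refine ⟨Prof.bot, hb ▸ hPne, ?_⟩
    intro q hq
    rcases hkey q hq with rfl | ⟨r, hr, _⟩
    · exact profLe_refl _
    · exact absurd ⟨r, hr⟩ hFne

/-- **Theorem 4.** The all-improvements strategy `I_σ` is locally optimal:
for a reasonable strategy `σ`, every direct improvement `σ' ⊆ I_σ` satisfies
`𝒱_{σ'}(s) ≼ 𝒱_{I_σ}(s)` for all nodes `s`. -/
theorem all_improvements_locally_optimal {V : Type} {d : ℕ} [Fintype V] (A : PGA V d)
    (σ σ' : V → Option V → Prop) (Vσ VI V' : Option V → Prof d)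
    (hσ : Strategy0 A σ) (hreas : Reasonable A σ) (hV : IsValuation A σ Vσ)
    (hσ' : Strategy0 A σ') (hsub : ∀ s t, σ' s t → Improvement A Vσ s t)
    (hVI : IsValuation A (Improvement A Vσ) VI)
    (hV' : IsValuation A σ' V') :
    ∀ x : Option V, Prof.Le (V' x) (VI x) := by
  intro x
  cases x with
  | none => rw [hV'.1, hVI.1]; exact profLe_refl _
  | some s =>
    by_cases htop : VI (some s) = Prof.top
    · rw [htop]; exact profLe_top _
    · obtain ⟨τs, hτs, hmax⟩ := (hVI.2 s).1
      have hnotop : ∀ ρ, IsPlay A σ' τs s ρ → PlayValue A ρ ≠ Prof.top := by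
        intro ρ hρ hc
        have hmem : Prof.top ∈
            {q | ∃ π, IsPlay A (Improvement A Vσ) τs s π ∧ q = PlayValue A π} :=
          ⟨ρ, play_mono hsub hρ, hc.symm⟩
        exact htop (eq_top_of_top_le (hmax.2 _ hmem))
      obtain ⟨m, hmOf⟩ := exists_max_play A σ' τs hσ' hτs s hnotop
      have hmP : Prof.Le m (VI (some s)) := by
        obtain ⟨π, hπ, hπv⟩ := hmOf.1
        exact hmax.2 _ ⟨π, play_mono hsub hπ, hπv⟩
      have hm' : m ∈ {p | ∃ τ, Strategy1 A τ ∧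
          IsMaxOf {q | ∃ π, IsPlay A σ' τ s π ∧ q = PlayValue A π} p} := ⟨τs, hτs, hmOf⟩
      exact profLe_trans ((hV'.2 s).2 m hm') hmP
end
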